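/- arXiv:1403.6714 — 2 statements merged into one kernel-verified Lean document; each statement's English description precedes it below -/
import Mathlib

section
/- There exists a bijection φ from the set of geometric hyperplanes of the binary Segre variety S_(3) onto the set of nonzero vectors of the vector space (ZMod 2)^8 such that for any two distinct geometric hyperplanes H' and H'' of S_(3), φ of the complement of the symmetric difference H' Δ H'' equals φ(H') + φ(H''). (That is, the ordinary Veldkamp space of S_(3) is isomorphic to PG(7,2).) -/
open scoped symmDiff

/-- A point of the binary Segre variety `S_(N)`. -/
abbrev SegrePoint (N : ℕ) := Fin N → Fin 3

/-- The line of `S_(N)` through `f` in direction `i`. -/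
def segreLine {N : ℕ} (i : Fin N) (f : SegrePoint N) : Set (SegrePoint N) :=
  {x | ∀ j, j ≠ i → x j = f j}

/-- A geometric hyperplane of `S_(N)`: a proper subset of the point set such that
every line either lies fully in it or meets it in exactly one point. -/
def IsGeomHyperplane {N : ℕ} (H : Set (SegrePoint N)) : Prop :=
  H ≠ Set.univ ∧ ∀ (i : Fin N) (f : SegrePoint N),
    segreLine i f ⊆ H ∨ (segreLine i f ∩ H).ncard = 1

/-- Two points of `S_(N)` are collinear iff they differ in exactly one coordinate. -/
def SegreCollinear {N : ℕ} (x y : SegrePoint N) : Prop :=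
  hammingDist x y = 1

/-- An ovoid of `S_(N)`: a set of `3^(N-1)` pairwise non-collinear points. -/
def IsOvoid {N : ℕ} (O : Set (SegrePoint N)) : Prop :=
  O.ncard = 3 ^ (N - 1) ∧ O.Pairwise fun x y => ¬ SegreCollinear x y

/-! ### Auxiliary machinery for the Veldkamp space of `S_(3)` -/

open Function

/-- The two generators of the sum-zero code on `Fin 3` over `GF(2)`. -/
def sgW : Fin 2 → Fin 3 → ZMod 2
  | 0 => fun t => if t = 2 then 0 else 1
  | 1 => fun t => if t = 0 then 0 else 1

/-- The `j`-th binary digit of `k : Fin 8`. -/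
def sgBit (k : Fin 8) (j : Fin 3) : Fin 2 := ⟨k.val / 2 ^ j.val % 2, Nat.mod_lt _ two_pos⟩

/-- The eight points of `S_(3)` with all coordinates in `{0, 2}`. -/
def sgP (k : Fin 8) : SegrePoint 3 := fun j => if sgBit k j = 0 then 0 else 2

/-- The basic tensor-product functions spanning the code. -/
def sgM (k : Fin 8) (x : SegrePoint 3) : ZMod 2 := ∏ j : Fin 3, sgW (sgBit k j) (x j)

lemma sgD1 : ∀ k k' : Fin 8, sgM k (sgP k') = if k = k' then 1 else 0 := by decide

lemma sgD2 : ∀ (k : Fin 8) (i : Fin 3) (f : SegrePoint 3),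
    sgM k (update f i 0) + sgM k (update f i 1) + sgM k (update f i 2) = 0 := by decide

lemma sgD3 : ∀ x : SegrePoint 3, (∀ j, x j ≠ 1) → ∃ k, x = sgP k := by decide

lemma sgH2 : (2 : ZMod 2) = 0 := by decide

lemma sg_elim (d : SegrePoint 3 → ZMod 2)
    (hC : ∀ (i : Fin 3) (f : SegrePoint 3),
      d (update f i 0) + d (update f i 1) + d (update f i 2) = 0)
    (j : Fin 3) (x : SegrePoint 3) (hx : x j = 1) :
    d x = d (update x j 0) + d (update x j 2) := by
  have h := hC j x
  rw [show update x j 1 = x from by rw [← hx, Function.update_eq_self]] at h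
  linear_combination h - (d (update x j 0) + d (update x j 2)) * sgH2

/-- A function in the code vanishing on all eight `{0,2}`-points vanishes everywhere. -/
lemma sg_code_zero (d : SegrePoint 3 → ZMod 2)
    (hC : ∀ (i : Fin 3) (f : SegrePoint 3),
      d (update f i 0) + d (update f i 1) + d (update f i 2) = 0)
    (h8 : ∀ k : Fin 8, d (sgP k) = 0) : ∀ x, d x = 0 := by
  have base : ∀ x : SegrePoint 3, (∀ j, x j ≠ 1) → d x = 0 := by
    intro x hx
    obtain ⟨k, rfl⟩ := sgD3 x hx
    exact h8 k
  have key : ∀ (n : ℕ) (x : SegrePoint 3),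
      (Finset.univ.filter fun j => x j = 1).card ≤ n → d x = 0 := by
    intro n
    induction n with
    | zero =>
      intro x hx
      apply base
      intro j hj
      have : j ∈ Finset.univ.filter fun j => x j = 1 := by simp [hj]
      simp [Finset.card_eq_zero.mp (Nat.le_zero.mp hx)] at this
    | succ n ih =>
      intro x hx
      by_cases h : ∀ j, x j ≠ 1
      · exact base x h
      · push_neg at h
        obtain ⟨j, hj⟩ := h
        have hsub : ∀ t : Fin 3, t ≠ 1 →
            (Finset.univ.filter fun j' => update x j t j' = 1).card ≤ n := by
          intro t ht
          have hs : (Finset.univ.filter fun j' => update x j t j' = 1) ⊆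
              (Finset.univ.filter fun j' => x j' = 1).erase j := by
            intro j' hj'
            simp only [Finset.mem_filter, Finset.mem_univ, true_and] at hj'
            by_cases hjj : j' = j
            · subst hjj; simp [Function.update_self] at hj'; exact absurd hj' ht
            · rw [Function.update_of_ne hjj] at hj'
              simp [Finset.mem_erase, hjj, hj']
          have hmem : j ∈ Finset.univ.filter fun j' => x j' = 1 := by simp [hj]
          calc _ ≤ _ := Finset.card_le_card hs
            _ = (Finset.univ.filter fun j' => x j' = 1).card - 1 :=
              Finset.card_erase_of_mem hmem
            _ ≤ n := by omega
        rw [sg_elim d hC j x hj, ih _ (hsub 0 (by decide)), ih _ (hsub 2 (by decide)),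
          add_zero]
  intro x
  exact key 3 x (le_trans (Finset.card_filter_le _ _) (by simp))

open Classical in
/-- The `GF(2)`-indicator function of a set of points. -/
noncomputable def sgChi (H : Set (SegrePoint 3)) (x : SegrePoint 3) : ZMod 2 :=
  if x ∈ H then 1 else 0

lemma segreLine_eq (i : Fin 3) (f : SegrePoint 3) :
    segreLine i f = {update f i 0, update f i 1, update f i 2} := by
  ext x
  constructor
  · intro hx
    have hx' : x = update f i (x i) := by
      funext j
      by_cases hji : j = i
      · subst hji; rw [Function.update_self]
      · rw [Function.update_of_ne hji]; exact hx j hji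
    have h3 : x i = 0 ∨ x i = 1 ∨ x i = 2 := by omega
    rcases h3 with h | h | h <;> rw [h] at hx' <;> simp [hx']
  · intro hx
    rcases hx with h | h | h <;> subst h <;>
      exact fun j hj => Function.update_of_ne hj _ _

lemma sg_update_ne (i : Fin 3) (f : SegrePoint 3) {s t : Fin 3} (hst : s ≠ t) :
    update f i s ≠ update f i t := by
  intro h
  have := congrFun h i
  rw [Function.update_self, Function.update_self] at this
  exact hst this

lemma sg_line_cond_iff (H : Set (SegrePoint 3)) (i : Fin 3) (f : SegrePoint 3) :
    (segreLine i f ⊆ H ∨ (segreLine i f ∩ H).ncard = 1) ↔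
    sgChi H (update f i 0) + sgChi H (update f i 1) + sgChi H (update f i 2) = 1 := by
  classical
  set a := update f i 0
  set b := update f i 1
  set c := update f i 2
  have hab : a ≠ b := sg_update_ne i f (by decide)
  have hac : a ≠ c := sg_update_ne i f (by decide)
  have hbc : b ≠ c := sg_update_ne i f (by decide)
  rw [segreLine_eq]
  have hset : ({a, b, c} : Set (SegrePoint 3)) ∩ H =
      ↑(({a, b, c} : Finset (SegrePoint 3)).filter (· ∈ H)) := by
    ext x; simp [and_comm]
  have hcard : (({a, b, c} : Set (SegrePoint 3)) ∩ H).ncard =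
      (if a ∈ H then 1 else 0) + (if b ∈ H then 1 else 0) + (if c ∈ H then 1 else 0) := by
    rw [hset, Set.ncard_coe_finset, Finset.card_filter]
    rw [show ({a, b, c} : Finset (SegrePoint 3)) = insert a {b, c} from rfl]
    rw [Finset.sum_insert (by simp [hab, hac]), Finset.sum_pair hbc]
    ring
  rw [hcard, Set.insert_subset_iff, Set.insert_subset_iff, Set.singleton_subset_iff]
  unfold sgChi
  by_cases ha : a ∈ H <;> by_cases hb : b ∈ H <;> by_cases hc : c ∈ H <;>
    simp [a, b, c] at ha hb hc ⊢ <;> simp [ha, hb, hc] <;> decide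

lemma sg_hyperplane_iff (H : Set (SegrePoint 3)) :
    IsGeomHyperplane H ↔
    (H ≠ Set.univ ∧ ∀ (i : Fin 3) (f : SegrePoint 3),
      sgChi H (update f i 0) + sgChi H (update f i 1) + sgChi H (update f i 2) = 1) :=
  and_congr Iff.rfl (forall₂_congr fun i f => sg_line_cond_iff H i f)

/-- The explicit solution with prescribed values on the eight basic points. -/
def sgG (v : Fin 8 → ZMod 2) (x : SegrePoint 3) : ZMod 2 := 1 + ∑ k : Fin 8, v k * sgM k x

lemma sgG_line (v : Fin 8 → ZMod 2) (i : Fin 3) (f : SegrePoint 3) :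
    sgG v (update f i 0) + sgG v (update f i 1) + sgG v (update f i 2) = 1 := by
  have hsum : (∑ k : Fin 8, v k * sgM k (update f i 0)) +
      (∑ k : Fin 8, v k * sgM k (update f i 1)) +
      (∑ k : Fin 8, v k * sgM k (update f i 2)) = 0 := by
    rw [← Finset.sum_add_distrib, ← Finset.sum_add_distrib]
    apply Finset.sum_eq_zero
    intro k _
    have h := sgD2 k i f
    linear_combination v k * h
  unfold sgG
  have h3 : (1 : ZMod 2) + 1 + 1 = 1 := by decide
  linear_combination hsum + h3

lemma sgG_pp (v : Fin 8 → ZMod 2) (k : Fin 8) : sgG v (sgP k) = 1 + v k := by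
  unfold sgG
  have : ∀ k' : Fin 8, sgM k' (sgP k) = if k' = k then 1 else 0 := fun k' => sgD1 k' k
  simp [this, mul_ite, Finset.sum_ite_eq']

lemma sgChi_G (v : Fin 8 → ZMod 2) (x : SegrePoint 3) :
    sgChi {y | sgG v y = 1} x = sgG v x := by
  unfold sgChi
  have h0 : ∀ a : ZMod 2, a = 0 ∨ a = 1 := by decide
  rcases h0 (sgG v x) with h | h <;> simp [h]

lemma sg_mem_of_chi {H : Set (SegrePoint 3)} {x : SegrePoint 3} (h : sgChi H x = 1) :
    x ∈ H := by
  by_contra hx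
  simp [sgChi, hx] at h

theorem segre3_veldkamp_space_is_PG72 :
    ∃ φ : Set (SegrePoint 3) → (Fin 8 → ZMod 2),
      Set.BijOn φ {H : Set (SegrePoint 3) | IsGeomHyperplane H}
        {v : Fin 8 → ZMod 2 | v ≠ 0} ∧
      ∀ H' H'' : Set (SegrePoint 3),
        IsGeomHyperplane H' → IsGeomHyperplane H'' → H' ≠ H'' →
        φ ((H' ∆ H'')ᶜ) = φ H' + φ H'' := by
  classical
  refine ⟨fun H k => sgChi H (sgP k) + 1, ⟨?_, ?_, ?_⟩, ?_⟩
  · -- MapsTo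
    intro H hH h0
    simp only [Set.mem_setOf_eq] at hH h0 ⊢
    have hlines' := ((sg_hyperplane_iff H).mp hH).2
    have hC : ∀ (i : Fin 3) (f : SegrePoint 3),
        (fun x => sgChi H x + 1) (update f i 0) + (fun x => sgChi H x + 1) (update f i 1) +
          (fun x => sgChi H x + 1) (update f i 2) = 0 := by
      intro i f
      have h := hlines' i f
      simp only
      linear_combination h + 2 * sgH2
    have h8 : ∀ k : Fin 8, (fun x => sgChi H x + 1) (sgP k) = 0 := fun k => congrFun h0 k
    have hall := sg_code_zero (fun x => sgChi H x + 1) hC h8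
    apply hH.1
    apply Set.eq_univ_of_forall
    intro x
    apply sg_mem_of_chi (H := H)
    have := hall x
    linear_combination this - sgH2
  · -- InjOn
    intro H1 hH1 H2 hH2 hφ
    simp only [Set.mem_setOf_eq] at hH1 hH2
    have hl1' := ((sg_hyperplane_iff H1).mp hH1).2
    have hl2' := ((sg_hyperplane_iff H2).mp hH2).2
    have hC : ∀ (i : Fin 3) (f : SegrePoint 3),
        (fun x => sgChi H1 x + sgChi H2 x) (update f i 0) +
          (fun x => sgChi H1 x + sgChi H2 x) (update f i 1) +
          (fun x => sgChi H1 x + sgChi H2 x) (update f i 2) = 0 := by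
      intro i f
      simp only
      linear_combination hl1' i f + hl2' i f + sgH2
    have h8 : ∀ k : Fin 8, (fun x => sgChi H1 x + sgChi H2 x) (sgP k) = 0 := by
      intro k
      have := congrFun hφ k
      simp only at this ⊢
      linear_combination this + sgChi H2 (sgP k) * sgH2
    have hall := sg_code_zero (fun x => sgChi H1 x + sgChi H2 x) hC h8
    ext x
    have hx := hall x
    by_cases h1 : x ∈ H1 <;> by_cases h2 : x ∈ H2 <;>
      simp [sgChi, h1, h2] at hx ⊢
  · -- SurjOn
    intro v hv
    simp only [Set.mem_setOf_eq] at hv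
    refine ⟨{x | sgG v x = 1}, ?_, ?_⟩
    · simp only [Set.mem_setOf_eq]
      rw [sg_hyperplane_iff]
      constructor
      · intro huniv
        apply hv
        funext k
        have : sgG v (sgP k) = 1 := Set.eq_univ_iff_forall.mp huniv (sgP k)
        rw [sgG_pp] at this
        simpa using by linear_combination this
      · intro i f
        rw [sgChi_G, sgChi_G, sgChi_G]
        exact sgG_line v i f
    · funext k
      show sgChi {x | sgG v x = 1} (sgP k) + 1 = v k
      rw [sgChi_G, sgG_pp]
      linear_combination sgH2
  · -- symmDiff
    intro H' H'' _ _ _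
    funext k
    have hmem : sgP k ∈ (H' ∆ H'')ᶜ ↔
        ¬((sgP k ∈ H' ∧ sgP k ∉ H'') ∨ (sgP k ∈ H'' ∧ sgP k ∉ H')) := by
      rw [Set.mem_compl_iff, Set.mem_symmDiff]
    simp only [Pi.add_apply, sgChi, hmem]
    by_cases h1 : sgP k ∈ H' <;> by_cases h2 : sgP k ∈ H'' <;> simp [h1, h2] <;> decide
end

section
/- Exactly 135 geometric hyperplanes of the binary Segre variety S_(3) contain a deep point, i.e., a point all three lines through which are fully contained in the hyperplane. -/
set_option maxRecDepth 10000

open scoped symmDiff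

/-! ### Auxiliary machinery -/

def ext3 (h : Fin 2 → Bool) : Fin 3 → Bool := ![h 0, h 1, xor (h 0) (h 1)]

def extF (g : Fin 2 → Fin 2 → Fin 2 → Bool) (x : SegrePoint 3) : Bool :=
  ext3 (fun a => ext3 (fun b => ext3 (fun c => g a b c) (x 2)) (x 1)) (x 0)

lemma ext3_parity : ∀ h : Fin 2 → Bool,
    xor (ext3 h 0) (xor (ext3 h 1) (ext3 h 2)) = false := by decide

lemma xor3_lift : ∀ (h₀ h₁ h₂ : Fin 2 → Bool),
    (xor (h₀ 0) (xor (h₁ 0) (h₂ 0)) = false) →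
    (xor (h₀ 1) (xor (h₁ 1) (h₂ 1)) = false) →
    ∀ v : Fin 3, xor (ext3 h₀ v) (xor (ext3 h₁ v) (ext3 h₂ v)) = false := by decide

lemma extF_cube : ∀ (g : Fin 2 → Fin 2 → Fin 2 → Bool) (a b c : Fin 2),
    extF g ![a.castSucc, b.castSucc, c.castSucc] = g a b c := by decide

/-- Parity property of a boolean function on points. -/
def Par (χ : SegrePoint 3 → Bool) : Prop :=
  ∀ (i : Fin 3) (f : SegrePoint 3),
    xor (χ (Function.update f i 0)) (xor (χ (Function.update f i 1)) (χ (Function.update f i 2))) = false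

lemma update_apply' {f : SegrePoint 3} {i j : Fin 3} (k : Fin 3) (h : j ≠ i) :
    Function.update f i k j = f j := Function.update_of_ne h k f

lemma extF_par (g : Fin 2 → Fin 2 → Fin 2 → Bool) : Par (extF g) := by
  intro i f
  fin_cases i
  · simp only [extF, Fin.isValue, Function.update_self,
      Function.update_of_ne (show (1:Fin 3) ≠ 0 by decide),
      Function.update_of_ne (show (2:Fin 3) ≠ 0 by decide)]
    exact ext3_parity _
  · simp only [extF, Fin.isValue, Function.update_self,
      Function.update_of_ne (show (0:Fin 3) ≠ 1 by decide),
      Function.update_of_ne (show (2:Fin 3) ≠ 1 by decide)]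
    exact xor3_lift _ _ _ (ext3_parity _) (ext3_parity _) (f 0)
  · simp only [extF, Fin.isValue, Function.update_self,
      Function.update_of_ne (show (0:Fin 3) ≠ 2 by decide),
      Function.update_of_ne (show (1:Fin 3) ≠ 2 by decide)]
    refine xor3_lift _ _ _ ?_ ?_ (f 0) <;>
      exact xor3_lift _ _ _ (ext3_parity _) (ext3_parity _) (f 1)

lemma bool_red : ∀ a b c : Bool, xor a (xor b c) = false → c = xor a b := by decide

lemma par_red {χ : SegrePoint 3 → Bool} (h : Par χ) (i : Fin 3) (f : SegrePoint 3) :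
    χ (Function.update f i 2) = xor (χ (Function.update f i 0)) (χ (Function.update f i 1)) :=
  bool_red _ _ _ (h i f)

lemma fin3_cases : ∀ v : Fin 3, v = 0 ∨ v = 1 ∨ v = 2 := by decide

lemma fin3_ne2 : ∀ v : Fin 3, v ≠ 2 → ∃ a : Fin 2, v = a.castSucc := by decide

/-- Any two parity functions agreeing on the cube agree everywhere. -/
lemma agree (χ : SegrePoint 3 → Bool) (hχ : Par χ) (g : Fin 2 → Fin 2 → Fin 2 → Bool)
    (hg : ∀ a b c : Fin 2, χ ![a.castSucc, b.castSucc, c.castSucc] = g a b c) :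
    ∀ x, χ x = extF g x := by
  have hge := extF_par g
  have base : ∀ x : SegrePoint 3, x 0 ≠ 2 → x 1 ≠ 2 → x 2 ≠ 2 → χ x = extF g x := by
    intro x h0 h1 h2
    obtain ⟨a, ha⟩ := fin3_ne2 _ h0
    obtain ⟨b, hb⟩ := fin3_ne2 _ h1
    obtain ⟨c, hc⟩ := fin3_ne2 _ h2
    have hx : x = ![a.castSucc, b.castSucc, c.castSucc] := by
      funext j
      fin_cases j <;> simpa
    rw [hx, hg, extF_cube]
  have step : ∀ (i : Fin 3) (P : SegrePoint 3 → Prop),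
      (∀ x k, P x → P (Function.update x i k)) →
      (∀ x, P x → x i ≠ 2 → χ x = extF g x) →
      (∀ x, P x → χ x = extF g x) := by
    intro i P hP hprev x hx
    by_cases h2 : x i = 2
    · have hxx : x = Function.update x i 2 := by
        conv_lhs => rw [← Function.update_eq_self i x]
        rw [h2]
      rw [hxx, par_red hχ, par_red hge,
        hprev _ (hP x 0 hx) (by simp),
        hprev _ (hP x 1 hx) (by simp)]
    · exact hprev x hx h2
  have lay2 : ∀ x : SegrePoint 3, x 0 ≠ 2 → x 1 ≠ 2 → χ x = extF g x := by
    intro x h0 h1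
    refine step 2 (fun x => x 0 ≠ 2 ∧ x 1 ≠ 2) ?_ ?_ x ⟨h0, h1⟩
    · intro y k hy
      exact ⟨by rw [update_apply' k (by decide)]; exact hy.1,
        by rw [update_apply' k (by decide)]; exact hy.2⟩
    · intro y hy h2; exact base y hy.1 hy.2 h2
  have lay1 : ∀ x : SegrePoint 3, x 0 ≠ 2 → χ x = extF g x := by
    intro x h0
    refine step 1 (fun x => x 0 ≠ 2) ?_ ?_ x h0
    · intro y k hy; rwa [update_apply' k (by decide)]
    · intro y hy h1; exact lay2 y hy h1
  intro x
  refine step 0 (fun _ => True) (fun _ _ _ => trivial) ?_ x trivial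
  intro y _ h0; exact lay1 y h0

lemma line_eq (i : Fin 3) (f : SegrePoint 3) :
    segreLine i f = {Function.update f i 0, Function.update f i 1, Function.update f i 2} := by
  ext x
  simp only [segreLine, Set.mem_setOf_eq, Set.mem_insert_iff, Set.mem_singleton_iff]
  constructor
  · intro h
    have hx : ∀ k : Fin 3, x i = k → x = Function.update f i k := by
      intro k hk
      funext j
      by_cases hj : j = i
      · subst hj; rw [Function.update_self, hk]
      · rw [update_apply' k hj, h j hj]
    rcases fin3_cases (x i) with h'|h'|h'
    · exact Or.inl (hx 0 h')
    · exact Or.inr (Or.inl (hx 1 h'))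
    · exact Or.inr (Or.inr (hx 2 h'))
  · intro h j hj
    rcases h with h|h|h <;> subst h <;> exact update_apply' _ hj

lemma update_mem_line (i : Fin 3) (f : SegrePoint 3) (k : Fin 3) :
    Function.update f i k ∈ segreLine i f := by
  intro j hj; exact update_apply' k hj

lemma update_inj {f : SegrePoint 3} {i : Fin 3} {k l : Fin 3}
    (h : Function.update f i k = Function.update f i l) : k = l := by
  have := congrFun h i
  rwa [Function.update_self, Function.update_self] at this

set_option maxHeartbeats 2000000 in
theorem segre3_hyperplanes_with_deep_point :
    {H : Set (SegrePoint 3) | IsGeomHyperplane H ∧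
      ∃ p ∈ H, ∀ (i : Fin 3) (f : SegrePoint 3),
        p ∈ segreLine i f → segreLine i f ⊆ H}.ncard = 135 := by
  classical
  set T : Set (Fin 2 → Fin 2 → Fin 2 → Bool) :=
    {g | (∃ x : SegrePoint 3, extF g x = true) ∧
      ∃ p : SegrePoint 3, ∀ (i : Fin 3) (k : Fin 3), extF g (Function.update p i k) = false}
    with hT
  set Φ : (Fin 2 → Fin 2 → Fin 2 → Bool) → Set (SegrePoint 3) :=
    fun g => {x | extF g x = false} with hΦ
  have hinj : Function.Injective Φ := by
    intro g₁ g₂ h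
    funext a b c
    have hx : ∀ x, extF g₁ x = extF g₂ x := by
      intro x
      have := Set.ext_iff.mp h x
      simp only [hΦ, Set.mem_setOf_eq] at this
      cases h1 : extF g₁ x <;> cases h2 : extF g₂ x <;> simp_all
    have := hx ![a.castSucc, b.castSucc, c.castSucc]
    rwa [extF_cube, extF_cube] at this
  have hset : {H : Set (SegrePoint 3) | IsGeomHyperplane H ∧
      ∃ p ∈ H, ∀ (i : Fin 3) (f : SegrePoint 3),
        p ∈ segreLine i f → segreLine i f ⊆ H} = Φ '' T := by
    ext H
    simp only [Set.mem_setOf_eq, Set.mem_image]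
    constructor
    · rintro ⟨⟨hne, hline⟩, p, hpH, hdeep⟩
      set χ : SegrePoint 3 → Bool := fun x => decide (x ∉ H) with hχdef
      have hχ_iff : ∀ x, χ x = false ↔ x ∈ H := by
        intro x; simp [hχdef]
      have hpar : Par χ := by
        intro i f
        rcases hline i f with hsub | hone
        · have h0 : ∀ k : Fin 3, χ (Function.update f i k) = false := fun k =>
            (hχ_iff _).mpr (hsub (update_mem_line i f k))
          rw [h0 0, h0 1, h0 2]; rfl
        · obtain ⟨a, ha⟩ := Set.ncard_eq_one.mp hone
          have haL : a ∈ segreLine i f := by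
            have : a ∈ segreLine i f ∩ H := ha ▸ rfl
            exact this.1
          have haH : a ∈ H := by
            have : a ∈ segreLine i f ∩ H := ha ▸ rfl
            exact this.2
          have hmem : ∀ k : Fin 3, Function.update f i k ∈ H ↔ Function.update f i k = a := by
            intro k
            constructor
            · intro hk
              have : Function.update f i k ∈ segreLine i f ∩ H := ⟨update_mem_line i f k, hk⟩
              rw [ha] at this; exact this
            · intro hk; rw [hk]; exact haH
          have haeq : ∀ k : Fin 3, a i = k → a = Function.update f i k := by
            intro k hk
            funext j
            by_cases hj : j = i
            · subst hj; rw [Function.update_self, hk]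
            · rw [update_apply' k hj, haL j hj]
          have vtrue : ∀ k : Fin 3, Function.update f i k ≠ a → χ (Function.update f i k) = true := by
            intro k hk
            have : Function.update f i k ∉ H := fun hc => hk ((hmem k).mp hc)
            simp [hχdef, this]
          have vfalse : ∀ k : Fin 3, Function.update f i k = a → χ (Function.update f i k) = false := by
            intro k hk
            exact (hχ_iff _).2 ((hmem k).mpr hk)
          rcases fin3_cases (a i) with h'|h'|h'
          · have hae := haeq 0 h'
            have n1 : Function.update f i 1 ≠ a := fun hc => by
              rw [hae] at hc; exact absurd (update_inj hc) (by decide)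
            have n2 : Function.update f i 2 ≠ a := fun hc => by
              rw [hae] at hc; exact absurd (update_inj hc) (by decide)
            rw [vfalse 0 hae.symm, vtrue 1 n1, vtrue 2 n2]; rfl
          · have hae := haeq 1 h'
            have n0 : Function.update f i 0 ≠ a := fun hc => by
              rw [hae] at hc; exact absurd (update_inj hc) (by decide)
            have n2 : Function.update f i 2 ≠ a := fun hc => by
              rw [hae] at hc; exact absurd (update_inj hc) (by decide)
            rw [vtrue 0 n0, vfalse 1 hae.symm, vtrue 2 n2]; rfl
          · have hae := haeq 2 h'
            have n0 : Function.update f i 0 ≠ a := fun hc => by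
              rw [hae] at hc; exact absurd (update_inj hc) (by decide)
            have n1 : Function.update f i 1 ≠ a := fun hc => by
              rw [hae] at hc; exact absurd (update_inj hc) (by decide)
            rw [vtrue 0 n0, vtrue 1 n1, vfalse 2 hae.symm]; rfl
      set g : Fin 2 → Fin 2 → Fin 2 → Bool :=
        fun a b c => χ ![a.castSucc, b.castSucc, c.castSucc] with hgdef
      have hag : ∀ x, χ x = extF g x := agree χ hpar g (fun a b c => rfl)
      refine ⟨g, ⟨?_, ?_⟩, ?_⟩
      · obtain ⟨x, hx⟩ := Set.ne_univ_iff_exists_notMem H |>.mp hne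
        exact ⟨x, by rw [← hag]; simp [hχdef, hx]⟩
      · refine ⟨p, fun i k => ?_⟩
        rw [← hag]
        have : Function.update p i k ∈ H := by
          have hpL : p ∈ segreLine i p := fun j _ => rfl
          exact hdeep i p hpL (update_mem_line i p k)
        exact (hχ_iff _).mpr this
      · ext x
        simp only [hΦ, Set.mem_setOf_eq, ← hag, hχ_iff]
    · rintro ⟨g, ⟨⟨w, hw⟩, p, hp⟩, rfl⟩
      have hmem_iff : ∀ x, x ∈ Φ g ↔ extF g x = false := fun x => Iff.rfl
      have hpar := extF_par g
      refine ⟨⟨?_, ?_⟩, ?_⟩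
      · intro hc
        have : extF g w = false := by rw [← hmem_iff]; rw [hc]; trivial
        rw [hw] at this; simp at this
      · intro i f
        have hline3 := line_eq i f
        have hp3 := hpar i f
        cases h0 : extF g (Function.update f i 0) <;>
          cases h1 : extF g (Function.update f i 1) <;>
          cases h2 : extF g (Function.update f i 2) <;>
          rw [h0, h1, h2] at hp3 <;> simp at hp3 <;>
        [ (left; rw [hline3]; intro x hx
           rcases hx with h|h|h <;>
             subst h <;> assumption);
          (right
           have : segreLine i f ∩ Φ g = {Function.update f i 0} := by
             ext x
             rw [hline3]
             simp only [Set.mem_inter_iff, Set.mem_insert_iff, Set.mem_singleton_iff,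
               hmem_iff]
             constructor
             · rintro ⟨h|h|h, hxg⟩ <;> subst h <;> first
               | rfl
               | simp_all
             · rintro rfl; exact ⟨Or.inl rfl, h0⟩
           rw [this, Set.ncard_singleton]);
          (right
           have : segreLine i f ∩ Φ g = {Function.update f i 1} := by
             ext x
             rw [hline3]
             simp only [Set.mem_inter_iff, Set.mem_insert_iff, Set.mem_singleton_iff,
               hmem_iff]
             constructor
             · rintro ⟨h|h|h, hxg⟩ <;> subst h <;> first
               | rfl
               | simp_all
             · rintro rfl; exact ⟨Or.inr (Or.inl rfl), h1⟩
           rw [this, Set.ncard_singleton]);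
          (right
           have : segreLine i f ∩ Φ g = {Function.update f i 2} := by
             ext x
             rw [hline3]
             simp only [Set.mem_inter_iff, Set.mem_insert_iff, Set.mem_singleton_iff,
               hmem_iff]
             constructor
             · rintro ⟨h|h|h, hxg⟩ <;> subst h <;> first
               | rfl
               | simp_all
             · rintro rfl; exact ⟨Or.inr (Or.inr rfl), h2⟩
           rw [this, Set.ncard_singleton])]
      · refine ⟨p, ?_, ?_⟩
        · have := hp 0 (p 0)
          rwa [Function.update_eq_self] at this
        · intro i f hpf x hx
          have hxp : x = Function.update p i (x i) := by
            funext j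
            by_cases hj : j = i
            · subst hj; rw [Function.update_self]
            · rw [update_apply' _ hj, hx j hj, ← hpf j hj]
          rw [hmem_iff, hxp]
          exact hp i (x i)
  rw [hset, Set.ncard_image_of_injective T hinj]
  have hTfin : T = ↑(Finset.univ.filter (fun g : Fin 2 → Fin 2 → Fin 2 → Bool =>
      (∃ x : SegrePoint 3, extF g x = true) ∧
      ∃ p : SegrePoint 3, ∀ (i : Fin 3) (k : Fin 3), extF g (Function.update p i k) = false)) := by
    ext g
    simp [hT]
  rw [hTfin, Set.ncard_coe_finset]
  decide
end
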